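/- Let M and H be pointed sets with maps varφ: H×M→M, ψ: H×M→H, φ: M×M→M (written x·x'), θ: M×M→H, μ: H×H→H (written h∗h'), γ: H×H→M satisfying the normalization conditions varφ(1,x)=x, varφ(h,e)=e, ψ(h,e)=h, ψ(1,x)=1, e·e=e, 1∗1=1, θ(e,e)=1, γ(1,1)=e, and conditions (phi-mu), (theta-gamma), and the eight associativity-type conditions of Proposition 2.3, together with existence of right and left inverses for · and ∗. Then M × H is a group with multiplication (x,h)(x',h') = ( x·[varφ(h,x')·γ(ψ(h,x'),h')], [θ(x,varφ(h,x'))∗ψ(h,x')]∗h' ) and unit (e,1). -/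
import Mathlib


/-- The bicocycle double cross product multiplication on `M × H`:
`(x,h)(x',h') = ( x·[varφ(h,x')·γ(ψ(h,x'),h')], [θ(x,varφ(h,x'))∗ψ(h,x')]∗h' )`. -/
def bdcpMul {M H : Type*}
    (vphi : H → M → M) (psi : H → M → H) (phi : M → M → M)
    (th : M → M → H) (mu : H → H → H) (gam : H → H → M)
    (p q : M × H) : M × H :=
  (phi p.1 (phi (vphi p.2 q.1) (gam (psi p.2 q.1) q.2)),
   mu (mu (th p.1 (vphi p.2 q.1)) (psi p.2 q.1)) q.2)

/-- The conditions of the bicocycle double cross product construction for groups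
(Proposition 2.3): normalization, unit laws, the eight mixed associativity-type
identities, and existence of one-sided inverses. -/
def BicocycleGroupConds {M H : Type*} (e : M) (o : H)
    (vphi : H → M → M) (psi : H → M → H) (phi : M → M → M)
    (th : M → M → H) (mu : H → H → H) (gam : H → H → M) : Prop :=
  -- normalization
  (∀ x, vphi o x = x) ∧ (∀ h, vphi h e = e) ∧
  (∀ h, psi h e = h) ∧ (∀ x, psi o x = o) ∧
  (phi e e = e) ∧ (mu o o = o) ∧ (th e e = o) ∧ (gam o o = e) ∧
  -- unit laws for `·` and `∗`
  (∀ x, phi e x = x) ∧ (∀ x, phi x e = x) ∧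
  (∀ h, mu o h = h) ∧ (∀ h, mu h o = h) ∧
  -- normalization of `θ` and `γ`
  (∀ x, th x e = o) ∧ (∀ x, th e x = o) ∧
  (∀ h, gam h o = e) ∧ (∀ h, gam o h = e) ∧
  -- (3.13)
  (∀ h x' x'' h'',
    phi (vphi h (phi x' x'')) (gam (psi h (phi x' x'')) (mu (th x' x'') h'')) =
      phi (vphi h x') (phi (vphi (psi h x') x'') (gam (psi (psi h x') x'') h''))) ∧
  -- (3.14)
  (∀ h x' x'' h'',
    mu (psi h (phi x' x'')) (mu (th x' x'') h'') =
      mu (mu (th (vphi h x') (vphi (psi h x') x'')) (psi (psi h x') x'')) h'') ∧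
  -- (3.15)
  (∀ x h h' x'',
    mu (th (phi x (gam h h')) (vphi (mu h h') x'')) (psi (mu h h') x'') =
      mu (mu (th x (vphi h (vphi h' x''))) (psi h (vphi h' x''))) (psi h' x'')) ∧
  -- (3.16)
  (∀ x h h' x'',
    phi (phi x (gam h h')) (vphi (mu h h') x'') =
      phi x (phi (vphi h (vphi h' x'')) (gam (psi h (vphi h' x'')) (psi h' x'')))) ∧
  -- (3.17)
  (∀ x x' x'' h'',
    phi x (phi x' x'') =
      phi (phi x x') (phi (vphi (th x x') x'') (gam (psi (th x x') x'') h''))) ∧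
  -- (3.18)
  (∀ x x' x'' h'',
    mu (th x (phi x' x'')) (mu (th x' x'') h'') =
      mu (mu (th (phi x x') (vphi (th x x') x'')) (psi (th x x') x'')) h'') ∧
  -- (3.19)
  (∀ x h h' h'',
    phi (phi x (gam h h')) (gam (mu h h') h'') =
      phi x (phi (vphi h (gam h' h'')) (gam (psi h (gam h' h'')) (mu h' h'')))) ∧
  -- (3.20)
  (∀ (x : M) h h' h'',
    mu (mu h h') h'' =
      mu (mu (th x (vphi h (gam h' h''))) (psi h (gam h' h''))) (mu h' h'')) ∧
  -- existence of right and left inverses for `·` and `∗`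
  (∀ x : M, ∃ xr, phi x xr = e) ∧ (∀ h : H, ∃ hr, mu h hr = o) ∧
  (∀ x : M, ∃ xl, phi xl x = e) ∧ (∀ h : H, ∃ hl, mu hl h = o)

/-- Under the conditions of the bicocycle double cross product
construction, `M × H` is a group with the bicocycle double cross product
multiplication and unit `(e, 1)`. -/
theorem bicocycle_double_cross_product_group
    (M H : Type*) (e : M) (o : H)
    (vphi : H → M → M) (psi : H → M → H) (phi : M → M → M)
    (th : M → M → H) (mu : H → H → H) (gam : H → H → M)
    (hconds : BicocycleGroupConds e o vphi psi phi th mu gam) :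
    (∀ a : M × H, bdcpMul vphi psi phi th mu gam (e, o) a = a) ∧
    (∀ a : M × H, bdcpMul vphi psi phi th mu gam a (e, o) = a) ∧
    (∀ a b c : M × H,
      bdcpMul vphi psi phi th mu gam (bdcpMul vphi psi phi th mu gam a b) c =
        bdcpMul vphi psi phi th mu gam a (bdcpMul vphi psi phi th mu gam b c)) ∧
    (∀ a : M × H, ∃ b : M × H,
      bdcpMul vphi psi phi th mu gam a b = (e, o) ∧
      bdcpMul vphi psi phi th mu gam b a = (e, o)) := by
  obtain ⟨n1, n2, p1, p2, pee, moo, tee, goo, u1, u2, u3, u4, t1, t2, g1, g2,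
    a13, a14, a15, a16, a17, a18, a19, a20, exMr, exHr, exMl, exHl⟩ := hconds
  set bm := bdcpMul vphi psi phi th mu gam with hbm
  have hmul : ∀ y k u mm, bm (y,k) (u,mm) =
      (phi y (phi (vphi k u) (gam (psi k u) mm)),
       mu (mu (th y (vphi k u)) (psi k u)) mm) := fun _ _ _ _ => rfl
  -- basic component lemmas
  have D1 : ∀ x h1 h2, mu (th x (gam h1 h2)) (mu h1 h2) = mu h1 h2 := by
    intro x h1 h2
    have h := a20 x o h1 h2
    rw [u3, n1, p2, u4] at h
    exact h.symm
  have D3 : ∀ x x1 h2, phi (phi x x1) (gam (th x x1) h2) = phi x x1 := by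
    intro x x1 h2
    have h := a17 x x1 e h2
    rw [u2, n2, p1, u1] at h
    exact h.symm
  have K1G : ∀ x x1 h1 h2, phi x (phi x1 (gam h1 h2)) =
      phi (phi x x1) (gam (mu (th x x1) h1) h2) := by
    intro x x1 h1 h2
    have h17 := a17 x x1 (gam h1 h2) (mu h1 h2)
    have h19 := a19 (phi x x1) (th x x1) h1 h2
    rw [D3 x x1 h1] at h19
    exact h17.trans h19.symm
  have GY : ∀ x x1 h1 h2, mu (mu (th x x1) h1) h2 =
      mu (th x (phi x1 (gam h1 h2))) (mu h1 h2) := by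
    intro x x1 h1 h2
    have h18 := a18 x x1 (gam h1 h2) (mu h1 h2)
    rw [D1 x1 h1 h2] at h18
    have h20 := a20 (phi x x1) (th x x1) h1 h2
    exact h20.trans h18.symm
  -- GE : gam of a theta-image is trivial
  have GE : ∀ x x1 h2, gam (th x x1) h2 = e := by
    intro x x1 h2
    obtain ⟨ul, hul⟩ := exMl (phi x x1)
    have GEe : ∀ s, gam (th ul (phi x x1)) s = e := by
      intro s
      have h := D3 ul (phi x x1) s
      rw [hul, u1] at h
      exact h
    have IDQ : ∀ s, gam (mu (th ul (phi x x1)) (th x x1)) s = e := by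
      intro s
      have hk := K1G ul (phi x x1) (th x x1) s
      rw [D3 x x1 s, hul, u1] at hk
      exact hk.symm
    obtain ⟨k0l, hk0l⟩ := exHl (th ul (phi x x1))
    have ID6 : ∀ s, mu k0l (mu (th ul (phi x x1)) s) = s := by
      intro s
      have h := a20 e k0l (th ul (phi x x1)) s
      rw [GEe s, n2, p1, t2, u3, hk0l, u3] at h
      exact h.symm
    have IDY : ∀ s, mu (mu (th ul (phi x x1)) (th x x1)) s =
        mu (th ul (phi x x1)) (mu (th x x1) s) := by
      intro s
      have h := GY ul (phi x x1) (th x x1) s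
      rw [D3 x x1 s] at h
      exact h
    have ID4 : ∀ s, gam k0l (mu (th ul (phi x x1)) s) = gam k0l (th ul (phi x x1)) := by
      intro s
      have h := a19 e k0l (th ul (phi x x1)) s
      rw [GEe s, n2, p1, u1, hk0l, g2, u2, u1, u1] at h
      exact h.symm
    have ID9 : ∀ xt h2', phi (phi xt (gam k0l (th ul (phi x x1)))) (gam (th x x1) h2') =
        phi xt (gam k0l (th ul (phi x x1))) := by
      intro xt h2'
      have h := a19 xt k0l (mu (th ul (phi x x1)) (th x x1)) h2'
      rw [ID4 (th x x1), ID6 (th x x1), IDQ h2', n2, p1, u1, IDY h2',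
        ID4 (mu (th x x1) h2')] at h
      exact h
    obtain ⟨cl, hcl⟩ := exMl (gam k0l (th ul (phi x x1)))
    have h := ID9 cl h2
    rw [hcl, u1] at h
    exact h
  have Tk4 : ∀ h h1 h2, mu (mu h h1) h2 = mu (psi h (gam h1 h2)) (mu h1 h2) := by
    intro h h1 h2
    have hh := a20 e h h1 h2
    rw [t2, u3] at hh
    exact hh
  -- TE1 : theta of a gamma-image is trivial
  have TE1 : ∀ z h h1, th z (gam h h1) = o := by
    intro z h h1
    have hD1q : mu (th z (gam h h1)) (mu h h1) = mu h h1 := D1 z h h1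
    obtain ⟨m0r, hm0r⟩ := exHr (mu h h1)
    have hpsi : psi (th z (gam h h1)) (gam (mu h h1) m0r) = o := by
      have h4 := Tk4 (th z (gam h h1)) (mu h h1) m0r
      rw [hD1q, hm0r, u4] at h4
      exact h4.symm
    have hvq : vphi (th z (gam h h1)) (gam (mu h h1) m0r) = gam (mu h h1) m0r := by
      have h19 := a19 e (th z (gam h h1)) (mu h h1) m0r
      rw [GE z (gam h h1) (mu h h1), hD1q, pee, u1, hpsi, hm0r, goo, u2, u1] at h19
      exact h19.symm
    obtain ⟨s2r, hs2r⟩ := exMr (gam (mu h h1) m0r)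
    have habs : ∀ w, mu (th z (gam h h1)) (mu (th (gam (mu h h1) m0r) s2r) w) =
        mu (th (gam (mu h h1) m0r) s2r) w := by
      intro w
      have h14 := a14 (th z (gam h h1)) (gam (mu h h1) m0r) s2r w
      rw [hs2r, p1, hvq, hpsi, n1, p2, u4] at h14
      exact h14
    obtain ⟨tr, htr⟩ := exHr (th (gam (mu h h1) m0r) s2r)
    have h := habs tr
    rw [htr, u4] at h
    exact h
  -- pair product computations
  have P3 : ∀ y k n, bm (y,k) (e,n) = (phi y (gam k n), mu k n) := by
    intro y k n; rw [hmul, n2, p1, u1, t1, u3]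
  have P6 : ∀ n v, bm (e,n) (v,o) = (vphi n v, psi n v) := by
    intro n v; rw [hmul, g1, u2, u1, t2, u3, u4]
  have Pmm : ∀ y k u, bm (y,k) (u,o) =
      (phi y (vphi k u), mu (th y (vphi k u)) (psi k u)) := by
    intro y k u; rw [hmul, g1, u2, u4]
  have Pee : ∀ n n2', bm (e,n) (e,n2') = (gam n n2', mu n n2') := by
    intro n n2'; rw [hmul, n2, p1, u1, u1, tee, u3]
  have P5 : ∀ u n, bm (u,o) (e,n) = (u, n) := by
    intro u n; rw [hmul, n2, p2, g2, u1, u2, t1, moo, u3]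
  have Pmm2 : ∀ u v, bm (u,o) (v,o) = (phi u v, th u v) := by
    intro u v; rw [Pmm, n1, p2, u4]
  -- key pair lemmas
  have K : ∀ (p : M × H) u mm, bm p (u, mm) = bm (bm p (u,o)) (e,mm) := by
    rintro ⟨y,k⟩ u mm
    rw [Pmm y k u, P3 (phi y (vphi k u)) (mu (th y (vphi k u)) (psi k u)) mm,
      hmul y k u mm]
    exact Prod.ext (K1G y (vphi k u) (psi k u) mm) rfl
  have A2' : ∀ (p : M × H) n v, bm (bm p (e,n)) (v,o) = bm p (bm (e,n) (v,o)) := by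
    rintro ⟨y,k⟩ n v
    rw [P3 y k n, Pmm (phi y (gam k n)) (mu k n) v, P6 n v,
      hmul y k (vphi n v) (psi n v)]
    exact Prod.ext (a16 y k n v) (a15 y k n v)
  have A4' : ∀ (p : M × H) n1' n2', bm (bm p (e,n1')) (e,n2') = bm p (bm (e,n1') (e,n2')) := by
    rintro ⟨y,k⟩ n1' n2'
    rw [P3 y k n1', P3 (phi y (gam k n1')) (mu k n1') n2', Pee n1' n2',
      hmul y k (gam n1' n2') (mu n1' n2')]
    exact Prod.ext (a19 y k n1' n2') (a20 y k n1' n2')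
  have R1 : ∀ k u v, phi (vphi k (phi u v)) (gam (psi k (phi u v)) (th u v)) =
      phi (vphi k u) (vphi (psi k u) v) := by
    intro k u v
    have h := a13 k u v o
    rw [u4, g1, u2] at h
    exact h
  have MMG : ∀ (p : M × H) u v, bm (bm p (u,o)) (v,o) = bm p (bm (u,o) (v,o)) := by
    rintro ⟨y,k⟩ u v
    rw [Pmm y k u, Pmm (phi y (vphi k u)) (mu (th y (vphi k u)) (psi k u)) v,
      Pmm2 u v, hmul y k (phi u v) (th u v)]
    refine Prod.ext ?_ ?_
    · -- MMG1
      have R3 := a16 (phi y (vphi k u)) (th y (vphi k u)) (psi k u) v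
      rw [GE y (vphi k u) (psi k u), u2] at R3
      have R2 := a17 y (vphi k u) (vphi (psi k u) v) (psi (psi k u) v)
      rw [R3, ← R2, ← R1 k u v]
    · -- MMG2
      have S1 := a15 (phi y (vphi k u)) (th y (vphi k u)) (psi k u) v
      rw [GE y (vphi k u) (psi k u), u2] at S1
      have S2 := a18 y (vphi k u) (vphi (psi k u) v) (psi (psi k u) v)
      have S3 : mu (th (vphi k u) (vphi (psi k u) v)) (psi (psi k u) v) =
          mu (psi k (phi u v)) (th u v) := by
        have h := a14 k u v o
        rw [u4, u4] at h
        exact h.symm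
      have S5 := GY y (vphi k (phi u v)) (psi k (phi u v)) (th u v)
      rw [S1, ← S2, S3, ← R1 k u v]
      exact S5.symm
  have ZE : ∀ (a p : M × H) mm, bm (bm a p) (e,mm) = bm a (bm p (e,mm)) := by
    rintro a ⟨w,n⟩ mm
    have hwg : bm (w,o) (gam n mm, o) = (phi w (gam n mm), o) := by
      rw [Pmm2, TE1 w n mm]
    rw [K a w n, A4' (bm a (w,o)) n mm, Pee n mm,
      K (bm a (w,o)) (gam n mm) (mu n mm), MMG a w (gam n mm), hwg, P3 w n mm,
      K a (phi w (gam n mm)) (mu n mm)]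
  have ZM : ∀ (a p : M × H) v, bm (bm a p) (v,o) = bm a (bm p (v,o)) := by
    rintro a ⟨w,n⟩ v
    have hwv : bm (w,o) (vphi n v, o) = (phi w (vphi n v), th w (vphi n v)) :=
      Pmm2 w (vphi n v)
    have hK2 : bm a (phi w (vphi n v), th w (vphi n v)) =
        bm (bm a (phi w (vphi n v), o)) (e, th w (vphi n v)) :=
      K a (phi w (vphi n v)) (th w (vphi n v))
    rw [K a w n, A2' (bm a (w,o)) n v, P6 n v,
      K (bm a (w,o)) (vphi n v) (psi n v), MMG a w (vphi n v), hwv, hK2,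
      A4' (bm a (phi w (vphi n v), o)) (th w (vphi n v)) (psi n v),
      Pee (th w (vphi n v)) (psi n v), GE w (vphi n v) (psi n v), Pmm w n v,
      K a (phi w (vphi n v)) (mu (th w (vphi n v)) (psi n v))]
  have hAssoc : ∀ a b c : M × H, bm (bm a b) c = bm a (bm b c) := by
    rintro a b ⟨x2, h2⟩
    rw [K (bm a b) x2 h2, ZM a b x2, ZE a (bm b (x2,o)) h2, ← K b x2 h2]
  have hUnitL : ∀ a : M × H, bm (e,o) a = a := by
    rintro ⟨y,k⟩
    rw [hmul, n1, p2, g2, u2, u1, t2, moo, u3]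
  have hUnitR : ∀ a : M × H, bm a (e,o) = a := by
    rintro ⟨y,k⟩
    rw [hmul, n2, p1, g1, pee, u2, t1, u3, u4]
  -- left inverses
  have hLinvE : ∀ k, ∃ l, bm l (e,k) = (e,o) := by
    intro k
    obtain ⟨kl, hkl⟩ := exHl k
    obtain ⟨xg, hxg⟩ := exMl (gam kl k)
    exact ⟨(xg, kl), by rw [P3, hxg, hkl]⟩
  have hLinv : ∀ a : M × H, ∃ l, bm l a = (e,o) := by
    rintro ⟨y,k⟩
    obtain ⟨yl, hyl⟩ := exMl y
    have h1 : bm (yl,o) (y,o) = (e, th yl y) := by rw [Pmm2, hyl]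
    obtain ⟨c, hc⟩ := hLinvE (th yl y)
    obtain ⟨d, hd⟩ := hLinvE k
    refine ⟨bm d (bm c (yl,o)), ?_⟩
    have hyk : bm (y,o) (e,k) = (y,k) := P5 y k
    calc bm (bm d (bm c (yl,o))) (y,k)
        = bm d (bm (bm c (yl,o)) (y,k)) := hAssoc d _ _
      _ = bm d (bm c (bm (yl,o) (y,k))) := by rw [hAssoc c (yl,o) (y,k)]
      _ = bm d (bm c (bm (bm (yl,o) (y,o)) (e,k))) := by rw [← hyk, ← hAssoc (yl,o) (y,o) (e,k)]
      _ = bm d (bm (bm c (e, th yl y)) (e,k)) := by rw [h1, hAssoc c _ _]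
      _ = bm d (e,k) := by rw [hc, hUnitL]
      _ = (e,o) := hd
  refine ⟨hUnitL, hUnitR, hAssoc, ?_⟩
  intro a
  obtain ⟨l, hl⟩ := hLinv a
  obtain ⟨l2, hl2⟩ := hLinv l
  have ha : l2 = a := by
    have h := hAssoc l2 l a
    rw [hl, hl2, hUnitR, hUnitL] at h
    exact h.symm
  exact ⟨l, by rw [← ha]; exact hl2, hl⟩
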